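/- arXiv:2309.05379 — 3 statements merged into one kernel-verified Lean document; each statement's English description precedes it below -/
import Mathlib

section
/- The Conditional-Median mechanism is 11-approximate for the social cost: for every facility-location instance, if (w₁,w₂) is the output of the Conditional-Median mechanism, then for every feasible solution (y₁,y₂) one has SC(w₁,w₂) ≤ 11 · SC(y₁,y₂). -/
open Finset

/-- The smallest element of `C` minimizing the distance to `p`. -/
noncomputable def tloc (C : Finset ℝ) (p : ℝ) : ℝ :=
  WithTop.untopD 0 ((C.filter fun c => ∀ c' ∈ C, |p - c| ≤ |p - c'|).min)

/-- The smallest element of `C \ {tloc C p}` minimizing the distance to `p`. -/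
noncomputable def sloc (C : Finset ℝ) (p : ℝ) : ℝ :=
  tloc (C.erase (tloc C p)) p

/-- The `⌈n/2⌉`-th smallest element of a multiset of reals (0 if empty). -/
noncomputable def medOf (l : Multiset ℝ) : ℝ :=
  (l.sort (· ≤ ·)).getD ((Multiset.card l + 1) / 2 - 1) 0

/-- The median position of the agents in `S` with positions `x`. -/
noncomputable def medianPos (S : Finset ℕ) (x : ℕ → ℝ) : ℝ :=
  medOf (S.val.map x)

/-- The Conditional-Median mechanism, assuming facility 1 is (weakly) more popular. -/
noncomputable def condMedian (x : ℕ → ℝ) (N1 N2 : Finset ℕ) (C : Finset ℝ) : ℝ × ℝ :=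
  if (N1 ∩ N2).card ≤ (N1 \ N2).card then
    let m1 := medianPos (N1 \ N2) x
    let m2 := medianPos N2 x
    let w1 := tloc C m1
    (w1, if tloc C m2 ≠ w1 then tloc C m2 else sloc C m2)
  else
    let m12 := medianPos (N1 ∩ N2) x
    (tloc C m12, sloc C m12)

/-- The output of the Conditional-Median mechanism (roles swapped if `|N₂| > |N₁|`). -/
noncomputable def mechOutput (x : ℕ → ℝ) (N1 N2 : Finset ℕ) (C : Finset ℝ) : ℝ × ℝ :=
  if N2.card ≤ N1.card then condMedian x N1 N2 C
  else (condMedian x N2 N1 C).swap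

/-- The cost of agent `i` at solution `y`: the distance to the farthest approved facility. -/
noncomputable def cost (x : ℕ → ℝ) (N1 N2 : Finset ℕ) (i : ℕ) (y : ℝ × ℝ) : ℝ :=
  if i ∈ N1 then
    if i ∈ N2 then max |x i - y.1| |x i - y.2| else |x i - y.1|
  else |x i - y.2|

/-- The social cost. -/
noncomputable def SC (x : ℕ → ℝ) (N1 N2 N : Finset ℕ) (y : ℝ × ℝ) : ℝ :=
  ∑ i ∈ N, cost x N1 N2 i y

/-- The max cost. -/
noncomputable def MC (x : ℕ → ℝ) (N1 N2 N : Finset ℕ) (hN : N.Nonempty) (y : ℝ × ℝ) : ℝ :=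
  N.sup' hN fun i => cost x N1 N2 i y

/-!
Only one property of `medianPos` matters: at least half of the agents lie weakly on each side of
it. Such a point `m` minimises `∑ |x i - q|` and satisfies `|S| |m - q| ≤ 2 ∑ |x i - q|`, so a
facility at a candidate no farther from `m` than `y` costs the agents of `S` at most three times
what `y` does.

Write `a`, `b`, `c` for the cost under `(y₁, y₂)` of `A = N₁ \ N₂`, `B = N₂ \ N₁` and
`I = N₁ ∩ N₂`. If `|I| ≤ |A|`, then `|A| |y₁ - w₁| ≤ 4a` pays for moving `I` to `w₁`, and for
moving `B ∪ I` away from `y₂` in the one bad case `y₂ = w₁`, where `w₂` is the second nearest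
candidate; this gives `11a + 3b + 6c`. If `|A| < |I|`, both facilities lie within
`max |m - y₁| |m - y₂|` of the median `m` of `I`, which gives `a + b + 11c`.
-/

theorem sum_abs_sub_le_sum_abs_sub_add_card_mul {ι : Type*} (S : Finset ι) (f : ι → ℝ)
    (p q : ℝ) : ∑ i ∈ S, |f i - p| ≤ ∑ i ∈ S, |f i - q| + #S * |q - p| := by
  have h := sum_le_sum fun i (_ : i ∈ S) => abs_sub_le (f i) q p
  rwa [sum_add_distrib, sum_const, nsmul_eq_mul] at h

theorem card_mul_abs_sub_le_two_mul_sum_max {ι : Type*} (S : Finset ι) (f : ι → ℝ) (y₁ y₂ : ℝ) :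
    #S * |y₁ - y₂| ≤ 2 * ∑ i ∈ S, max |f i - y₁| |f i - y₂| := by
  have hpt : ∀ i ∈ S, |y₁ - y₂| ≤ 2 * max |f i - y₁| |f i - y₂| := fun i _ => by
    linarith [abs_sub_le y₁ (f i) y₂, abs_sub_comm y₁ (f i), le_max_left |f i - y₁| |f i - y₂|,
      le_max_right |f i - y₁| |f i - y₂|]
  have h := card_nsmul_le_sum S _ _ hpt
  rwa [nsmul_eq_mul, ← mul_sum] at h

def IsMedian {ι : Type*} (S : Finset ι) (f : ι → ℝ) (m : ℝ) : Prop :=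
  #S ≤ 2 * #{i ∈ S | f i ≤ m} ∧ #S ≤ 2 * #{i ∈ S | m ≤ f i}

namespace IsMedian

variable {ι : Type*} {S : Finset ι} {f : ι → ℝ} {m : ℝ}

theorem neg (h : IsMedian S f m) : IsMedian S (-f) (-m) := by
  simpa only [IsMedian, Pi.neg_apply, neg_le_neg_iff] using h.symm

theorem sum_abs_sub_le_of_le (h : IsMedian S f m) {q : ℝ} (hmq : m ≤ q) :
    ∑ i ∈ S, |f i - m| ≤ ∑ i ∈ S, |f i - q| := by
  have hpt : ∀ i ∈ S, |f i - m| + (if f i ≤ m then q - m else -(q - m)) ≤ |f i - q| := by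
    intro i _
    split_ifs with hi
    · rw [abs_of_nonpos (by linarith), abs_of_nonpos (by linarith)]; linarith
    · linarith [abs_sub_le (f i) q m, abs_of_nonneg (sub_nonneg.2 hmq)]
  have hcard := card_filter_add_card_filter_not (s := S) (fun i => f i ≤ m)
  have hsum := sum_le_sum hpt
  rw [sum_add_distrib, sum_ite, sum_const, sum_const, nsmul_eq_mul, nsmul_eq_mul] at hsum
  have h2 : (#S : ℝ) ≤ 2 * #{i ∈ S | f i ≤ m} := by exact_mod_cast h.1
  have h3 : ((#{i ∈ S | f i ≤ m} + #{i ∈ S | ¬f i ≤ m} : ℕ) : ℝ) = #S := by exact_mod_cast hcard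
  push_cast at h3
  nlinarith

theorem sum_abs_sub_le (h : IsMedian S f m) (q : ℝ) :
    ∑ i ∈ S, |f i - m| ≤ ∑ i ∈ S, |f i - q| := by
  rcases le_total m q with hmq | hqm
  · exact h.sum_abs_sub_le_of_le hmq
  · simpa only [Pi.neg_apply, neg_sub_neg, abs_sub_comm] using
      h.neg.sum_abs_sub_le_of_le (neg_le_neg hqm)

theorem card_mul_abs_sub_le_of_le (h : IsMedian S f m) {q : ℝ} (hmq : m ≤ q) :
    #S * |m - q| ≤ 2 * ∑ i ∈ S, |f i - q| := by
  have hle : #{i ∈ S | f i ≤ m} • (q - m) ≤ ∑ i ∈ S with f i ≤ m, |f i - q| :=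
    card_nsmul_le_sum _ _ _ fun i hi => by
      rw [abs_of_nonpos (by linarith [(mem_filter.1 hi).2])]; linarith [(mem_filter.1 hi).2]
  have hsub : ∑ i ∈ S with f i ≤ m, |f i - q| ≤ ∑ i ∈ S, |f i - q| :=
    sum_le_sum_of_subset_of_nonneg (filter_subset _ _) fun i _ _ => abs_nonneg _
  have h2 : (#S : ℝ) ≤ 2 * #{i ∈ S | f i ≤ m} := by exact_mod_cast h.1
  rw [nsmul_eq_mul] at hle
  rw [abs_sub_comm, abs_of_nonneg (by linarith)]
  nlinarith

theorem card_mul_abs_sub_le (h : IsMedian S f m) (q : ℝ) :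
    #S * |m - q| ≤ 2 * ∑ i ∈ S, |f i - q| := by
  rcases le_total m q with hmq | hqm
  · exact h.card_mul_abs_sub_le_of_le hmq
  · simpa only [Pi.neg_apply, neg_sub_neg, abs_sub_comm] using
      h.neg.card_mul_abs_sub_le_of_le (neg_le_neg hqm)

theorem sum_abs_sub_le_three_mul (h : IsMedian S f m) {w y d : ℝ} (hw : |m - w| ≤ |m - y| + d) :
    ∑ i ∈ S, |f i - w| ≤ 3 * ∑ i ∈ S, |f i - y| + #S * d := by
  have hshift := sum_abs_sub_le_sum_abs_sub_add_card_mul S f w m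
  have hopt := h.sum_abs_sub_le y
  have hhalf := h.card_mul_abs_sub_le y
  have hcard : (#S : ℝ) * |m - w| ≤ #S * |m - y| + #S * d := by
    rw [← mul_add]; exact mul_le_mul_of_nonneg_left hw (Nat.cast_nonneg _)
  linarith

theorem sum_abs_sub_le_three_mul_of_abs_le (h : IsMedian S f m) {w y : ℝ}
    (hw : |m - w| ≤ |m - y|) :
    ∑ i ∈ S, |f i - w| ≤ 3 * ∑ i ∈ S, |f i - y| := by
  simpa using h.sum_abs_sub_le_three_mul (d := 0) (by rwa [add_zero])

theorem card_mul_max_abs_sub_le (h : IsMedian S f m) (y₁ y₂ : ℝ) :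
    #S * max |m - y₁| |m - y₂| ≤ 2 * ∑ i ∈ S, max |f i - y₁| |f i - y₂| := by
  rw [mul_max_of_nonneg _ _ (Nat.cast_nonneg _)]
  exact max_le
    ((h.card_mul_abs_sub_le y₁).trans (by gcongr with i; exact le_max_left _ _))
    ((h.card_mul_abs_sub_le y₂).trans (by gcongr with i; exact le_max_right _ _))

theorem sum_max_abs_sub_le_three_mul (h : IsMedian S f m) {w₁ w₂ y₁ y₂ : ℝ}
    (hw : max |m - w₁| |m - w₂| ≤ max |m - y₁| |m - y₂|) :
    ∑ i ∈ S, max |f i - w₁| |f i - w₂| ≤ 3 * ∑ i ∈ S, max |f i - y₁| |f i - y₂| := by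
  have hpt : ∀ i ∈ S, max |f i - w₁| |f i - w₂| ≤ |f i - m| + max |m - y₁| |m - y₂| :=
    fun i _ => max_le (by linarith [abs_sub_le (f i) m w₁, le_max_left |m - w₁| |m - w₂|])
      (by linarith [abs_sub_le (f i) m w₂, le_max_right |m - w₁| |m - w₂|])
  have hsum := sum_le_sum hpt
  rw [sum_add_distrib, sum_const, nsmul_eq_mul] at hsum
  have hopt : ∑ i ∈ S, |f i - m| ≤ ∑ i ∈ S, max |f i - y₁| |f i - y₂| :=
    (h.sum_abs_sub_le y₁).trans (sum_le_sum fun i _ => le_max_left _ _)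
  linarith [h.card_mul_max_abs_sub_le y₁ y₂]

theorem card_mul_abs_sub_le_four_mul (h : IsMedian S f m) {w y : ℝ} (hw : |m - w| ≤ |m - y|) :
    #S * |y - w| ≤ 4 * ∑ i ∈ S, |f i - y| := by
  have hyw : |y - w| ≤ 2 * |m - y| := by linarith [abs_sub_le y m w, abs_sub_comm y m]
  nlinarith [h.card_mul_abs_sub_le y, (Nat.cast_nonneg #S : (0 : ℝ) ≤ _)]

end IsMedian

theorem List.Pairwise.succ_length_le_countP_of_append_cons {pre rest : List ℝ} {m : ℝ}
    (h : (pre ++ m :: rest).Pairwise (· ≤ ·)) :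
    pre.length + 1 ≤ (pre ++ m :: rest).countP (· ≤ m) ∧
      rest.length + 1 ≤ (pre ++ m :: rest).countP (m ≤ ·) := by
  rw [List.pairwise_append, List.pairwise_cons] at h
  obtain ⟨-, ⟨hrest, -⟩, hpre⟩ := h
  have hpre' : pre.countP (· ≤ m) = pre.length :=
    List.countP_eq_length.2 fun a ha => decide_eq_true (hpre a ha m List.mem_cons_self)
  have hrest' : rest.countP (m ≤ ·) = rest.length :=
    List.countP_eq_length.2 fun b hb => decide_eq_true (hrest b hb)
  simp only [List.countP_append, List.countP_cons, hpre', hrest', le_refl, decide_true,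
    if_true]
  omega

theorem card_le_two_mul_countP_medOf (s : Multiset ℝ) :
    Multiset.card s ≤ 2 * s.countP (· ≤ medOf s) ∧
      Multiset.card s ≤ 2 * s.countP (medOf s ≤ ·) := by
  set l := s.sort (· ≤ ·)
  have hs : (l : Multiset ℝ) = s := Multiset.sort_eq s _
  have hsorted : l.Pairwise (· ≤ ·) := Multiset.pairwise_sort s _
  have hmed : medOf s = l.getD ((l.length + 1) / 2 - 1) 0 := by
    rw [medOf, ← Multiset.length_sort (· ≤ ·)]
  clear_value l
  subst hs
  rw [hmed, Multiset.coe_card, Multiset.coe_countP, Multiset.coe_countP]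
  set k := (l.length + 1) / 2 - 1
  rcases Nat.eq_zero_or_pos l.length with h0 | hpos
  · simp [h0]
  have hk : k < l.length := by omega
  have hsplit : l.take k ++ l[k] :: l.drop (k + 1) = l := by
    rw [← List.drop_eq_getElem_cons hk, List.take_append_drop]
  have hcount := (hsplit ▸ hsorted).succ_length_le_countP_of_append_cons
  rw [hsplit, List.length_take, List.length_drop] at hcount
  rw [List.getD_eq_getElem l 0 hk]
  omega

theorem isMedian_medianPos (S : Finset ℕ) (x : ℕ → ℝ) : IsMedian S x (medianPos S x) := by
  have h := card_le_two_mul_countP_medOf (S.val.map x)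
  rwa [Multiset.countP_map, Multiset.countP_map, Multiset.card_map] at h

theorem abs_sub_tloc_le {C : Finset ℝ} {c : ℝ} (hc : c ∈ C) (p : ℝ) :
    |p - tloc C p| ≤ |p - c| := by
  obtain ⟨c₀, hc₀, hmin⟩ := C.exists_min_image (fun c => |p - c|) ⟨c, hc⟩
  have hF : (C.filter fun c => ∀ c' ∈ C, |p - c| ≤ |p - c'|).Nonempty :=
    ⟨c₀, mem_filter.2 ⟨hc₀, hmin⟩⟩
  have htloc : tloc C p = (C.filter fun c => ∀ c' ∈ C, |p - c| ≤ |p - c'|).min' hF := by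
    rw [tloc, ← coe_min' hF]; rfl
  exact (htloc ▸ mem_filter.1 (min'_mem _ hF)).2 c hc

theorem abs_sub_sloc_le {C : Finset ℝ} {c p : ℝ} (hc : c ∈ C) (hct : c ≠ tloc C p) :
    |p - sloc C p| ≤ |p - c| :=
  abs_sub_tloc_le (mem_erase.2 ⟨hct, hc⟩) p

theorem abs_sub_ite_tloc_sloc_le {C : Finset ℝ} {w y₁ y₂ p : ℝ} (hy₁ : y₁ ∈ C) (hy₂ : y₂ ∈ C)
    (hy : y₁ ≠ y₂) :
    |p - (if tloc C p ≠ w then tloc C p else sloc C p)| ≤ |p - y₂| ∨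
      y₂ = w ∧ |p - (if tloc C p ≠ w then tloc C p else sloc C p)| ≤ |p - y₁| := by
  split_ifs with ht
  · exact Or.inl (abs_sub_tloc_le hy₂ p)
  · rw [not_not] at ht
    by_cases hw : y₂ = w
    · exact Or.inr ⟨hw, abs_sub_sloc_le hy₁ (ht ▸ hw ▸ hy)⟩
    · exact Or.inl (abs_sub_sloc_le hy₂ (ht ▸ hw))

theorem IsMedian.sum_abs_sub_ite_tloc_sloc_le {ι : Type*} {S : Finset ι} {f : ι → ℝ} {m : ℝ}
    (h : IsMedian S f m) {C : Finset ℝ} {w y₁ y₂ : ℝ} (hy₁ : y₁ ∈ C) (hy₂ : y₂ ∈ C)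
    (hy : y₁ ≠ y₂) :
    ∑ i ∈ S, |f i - (if tloc C m ≠ w then tloc C m else sloc C m)| ≤ 3 * ∑ i ∈ S, |f i - y₂| ∨
      y₂ = w ∧ ∑ i ∈ S, |f i - (if tloc C m ≠ w then tloc C m else sloc C m)|
        ≤ 3 * ∑ i ∈ S, |f i - y₂| + #S * |y₁ - y₂| := by
  rcases abs_sub_ite_tloc_sloc_le (w := w) (p := m) hy₁ hy₂ hy with hw | ⟨hyw, hw⟩
  · exact Or.inl (h.sum_abs_sub_le_three_mul_of_abs_le hw)
  · refine Or.inr ⟨hyw, h.sum_abs_sub_le_three_mul (hw.trans ?_)⟩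
    simpa only [abs_sub_comm y₂ y₁] using abs_sub_le m y₂ y₁

section SocialCost

variable {x : ℕ → ℝ} {N1 N2 N : Finset ℕ}

theorem SC_eq_sum_sdiff_add_sum_sdiff_add_sum_inter (hU : N1 ∪ N2 = N) (y : ℝ × ℝ) :
    SC x N1 N2 N y = ∑ i ∈ N1 \ N2, |x i - y.1| + ∑ i ∈ N2 \ N1, |x i - y.2|
      + ∑ i ∈ N1 ∩ N2, max |x i - y.1| |x i - y.2| := by
  have hN : N = N1 \ N2 ∪ (N2 \ N1 ∪ N1 ∩ N2) := by
    rw [← hU]; ext i; simp only [mem_union, mem_sdiff, mem_inter]; tauto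
  have hd₁ : Disjoint (N1 \ N2) (N2 \ N1 ∪ N1 ∩ N2) := by
    rw [disjoint_left]; intro i; simp only [mem_union, mem_sdiff, mem_inter]; tauto
  have hd₂ : Disjoint (N2 \ N1) (N1 ∩ N2) := by
    rw [disjoint_left]; intro i; simp only [mem_sdiff, mem_inter]; tauto
  rw [SC, hN, sum_union hd₁, sum_union hd₂, ← add_assoc]
  congr 1; congr 1
  all_goals refine sum_congr rfl fun i hi => ?_
  all_goals simp only [mem_sdiff, mem_inter] at hi; simp [cost, hi]

theorem SC_swap (hU : N1 ∪ N2 = N) (y : ℝ × ℝ) : SC x N1 N2 N y = SC x N2 N1 N y.swap := by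
  refine sum_congr rfl fun i hi => ?_
  rw [← hU, mem_union] at hi
  by_cases h1 : i ∈ N1 <;> by_cases h2 : i ∈ N2 <;> simp_all [cost, max_comm]

variable {C : Finset ℝ} {y1 y2 : ℝ}

theorem sum_abs_sub_ite_tloc_sloc_medianPos_le (hy1 : y1 ∈ C) (hy2 : y2 ∈ C) (hy : y1 ≠ y2)
    (hcard : #N2 ≤ #N1) {w K : ℝ} (hw : #(N1 \ N2) * |y1 - w| ≤ K) :
    ∑ i ∈ N2, |x i - (if tloc C (medianPos N2 x) ≠ w then tloc C (medianPos N2 x)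
        else sloc C (medianPos N2 x))|
      ≤ 3 * ∑ i ∈ N2, |x i - y2| + K + 2 * ∑ i ∈ N1 ∩ N2, max |x i - y1| |x i - y2| := by
  have hK : 0 ≤ K := (mul_nonneg (Nat.cast_nonneg _) (abs_nonneg _)).trans hw
  have hc : 0 ≤ ∑ i ∈ N1 ∩ N2, max |x i - y1| |x i - y2| :=
    sum_nonneg fun i _ => (abs_nonneg _).trans (le_max_left _ _)
  rcases (isMedian_medianPos N2 x).sum_abs_sub_ite_tloc_sloc_le (w := w) hy1 hy2 hy
    with h | ⟨rfl, h⟩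
  · linarith
  -- when `y2 = w` the output is only as close to the median as `y1`: the detour `|y1 - y2|` is
  -- paid by `N2 \ N1` through `hw` and by `N1 ∩ N2` through their max-costs
  · have hBA : (#(N2 \ N1) : ℝ) * |y1 - y2| ≤ #(N1 \ N2) * |y1 - y2| :=
      mul_le_mul_of_nonneg_right (mod_cast card_sdiff_le_card_sdiff_iff.2 hcard) (abs_nonneg _)
    have hcardN2 : (#N2 : ℝ) = #(N2 \ N1) + #(N1 ∩ N2) := by
      rw [inter_comm]; exact_mod_cast (card_sdiff_add_card_inter N2 N1).symm
    rw [hcardN2] at h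
    linarith [card_mul_abs_sub_le_two_mul_sum_max (N1 ∩ N2) x y1 y2]

theorem SC_condMedian_le_of_card_inter_le (hU : N1 ∪ N2 = N) (hy1 : y1 ∈ C) (hy2 : y2 ∈ C)
    (hy : y1 ≠ y2) (hcard : #N2 ≤ #N1) (hinter : #(N1 ∩ N2) ≤ #(N1 \ N2)) :
    SC x N1 N2 N (condMedian x N1 N2 C) ≤ 11 * SC x N1 N2 N (y1, y2) := by
  set m1 := medianPos (N1 \ N2) x
  set w1 := tloc C m1
  set w2 := if tloc C (medianPos N2 x) ≠ w1 then tloc C (medianPos N2 x)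
    else sloc C (medianPos N2 x)
  have hmech : condMedian x N1 N2 C = (w1, w2) := if_pos hinter
  have hN2 (g : ℕ → ℝ) : ∑ i ∈ N2, g i = ∑ i ∈ N1 ∩ N2, g i + ∑ i ∈ N2 \ N1, g i := by
    rw [← sum_inter_add_sum_sdiff N2 N1, inter_comm]
  rw [hmech, SC_eq_sum_sdiff_add_sum_sdiff_add_sum_inter hU,
    SC_eq_sum_sdiff_add_sum_sdiff_add_sum_inter hU]
  dsimp only
  set a := ∑ i ∈ N1 \ N2, |x i - y1|
  set c := ∑ i ∈ N1 ∩ N2, max |x i - y1| |x i - y2|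
  have ha : 0 ≤ a := sum_nonneg fun i _ => abs_nonneg _
  have hb : 0 ≤ ∑ i ∈ N2 \ N1, |x i - y2| := sum_nonneg fun i _ => abs_nonneg _
  have hc : 0 ≤ c := sum_nonneg fun i _ => (abs_nonneg _).trans (le_max_left _ _)
  have hcy1 : ∑ i ∈ N1 ∩ N2, |x i - y1| ≤ c := sum_le_sum fun i _ => le_max_left _ _
  have hcy2 : ∑ i ∈ N1 ∩ N2, |x i - y2| ≤ c := sum_le_sum fun i _ => le_max_right _ _
  have hmed1 := isMedian_medianPos (N1 \ N2) x
  have hw1 : |m1 - w1| ≤ |m1 - y1| := abs_sub_tloc_le hy1 m1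
  have hfar : (#(N1 \ N2) : ℝ) * |y1 - w1| ≤ 4 * a := hmed1.card_mul_abs_sub_le_four_mul hw1
  have hA : ∑ i ∈ N1 \ N2, |x i - w1| ≤ 3 * a := hmed1.sum_abs_sub_le_three_mul_of_abs_le hw1
  have hI : ∑ i ∈ N1 ∩ N2, |x i - w1| ≤ c + 4 * a := by
    have : (#(N1 ∩ N2) : ℝ) * |y1 - w1| ≤ #(N1 \ N2) * |y1 - w1| := by gcongr
    linarith [sum_abs_sub_le_sum_abs_sub_add_card_mul (N1 ∩ N2) x w1 y1]
  have hN2w : ∑ i ∈ N2, |x i - w2| ≤ 3 * ∑ i ∈ N2, |x i - y2| + 4 * a + 2 * c :=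
    sum_abs_sub_ite_tloc_sloc_medianPos_le hy1 hy2 hy hcard hfar
  have hmax : ∑ i ∈ N1 ∩ N2, max |x i - w1| |x i - w2|
      ≤ ∑ i ∈ N1 ∩ N2, |x i - w1| + ∑ i ∈ N1 ∩ N2, |x i - w2| := by
    rw [← sum_add_distrib]
    exact sum_le_sum fun i _ => max_le_add_of_nonneg (abs_nonneg _) (abs_nonneg _)
  linarith [hN2 fun i => |x i - w2|, hN2 fun i => |x i - y2|]

theorem SC_condMedian_le_of_card_sdiff_lt (hU : N1 ∪ N2 = N) (hy1 : y1 ∈ C) (hy2 : y2 ∈ C)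
    (hy : y1 ≠ y2) (hcard : #N2 ≤ #N1) (hsdiff : #(N1 \ N2) < #(N1 ∩ N2)) :
    SC x N1 N2 N (condMedian x N1 N2 C) ≤ 11 * SC x N1 N2 N (y1, y2) := by
  set m := medianPos (N1 ∩ N2) x
  set w1 := tloc C m
  set w2 := sloc C m
  have hmech : condMedian x N1 N2 C = (w1, w2) := if_neg (by omega)
  have hBA : #(N2 \ N1) ≤ #(N1 \ N2) := card_sdiff_le_card_sdiff_iff.2 hcard
  rw [hmech, SC_eq_sum_sdiff_add_sum_sdiff_add_sum_inter hU,
    SC_eq_sum_sdiff_add_sum_sdiff_add_sum_inter hU]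
  dsimp only
  set c := ∑ i ∈ N1 ∩ N2, max |x i - y1| |x i - y2|
  set M := max |m - y1| |m - y2|
  have hw1 : |m - w1| ≤ min |m - y1| |m - y2| :=
    le_min (abs_sub_tloc_le hy1 m) (abs_sub_tloc_le hy2 m)
  have hw2 : |m - w2| ≤ M := by
    by_cases h : y1 = w1
    · exact (abs_sub_sloc_le hy2 fun h2 => hy (h.trans h2.symm)).trans (le_max_right _ _)
    · exact (abs_sub_sloc_le hy1 h).trans (le_max_left _ _)
  have hI : ∑ i ∈ N1 ∩ N2, max |x i - w1| |x i - w2| ≤ 3 * c :=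
    (isMedian_medianPos _ x).sum_max_abs_sub_le_three_mul
      (max_le (hw1.trans ((min_le_left _ _).trans (le_max_left _ _))) hw2)
  have hM : (#(N1 ∩ N2) : ℝ) * M ≤ 2 * c :=
    (isMedian_medianPos _ x).card_mul_max_abs_sub_le y1 y2
  have hA : ∑ i ∈ N1 \ N2, |x i - w1| ≤ ∑ i ∈ N1 \ N2, |x i - y1| + 4 * c := by
    have hfar : |y1 - w1| ≤ 2 * M := by
      linarith [abs_sub_le y1 m w1, abs_sub_comm y1 m, min_le_left |m - y1| |m - y2|,
        le_max_left |m - y1| |m - y2|]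
    have : (#(N1 \ N2) : ℝ) * |y1 - w1| ≤ #(N1 ∩ N2) * (2 * M) :=
      mul_le_mul (by exact_mod_cast hsdiff.le) hfar (abs_nonneg _) (Nat.cast_nonneg _)
    linarith [sum_abs_sub_le_sum_abs_sub_add_card_mul (N1 \ N2) x w1 y1]
  have hB : ∑ i ∈ N2 \ N1, |x i - w2| ≤ ∑ i ∈ N2 \ N1, |x i - y2| + 4 * c := by
    have hfar : |y2 - w2| ≤ 2 * M := by
      linarith [abs_sub_le y2 m w2, abs_sub_comm y2 m, le_max_right |m - y1| |m - y2|]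
    have : (#(N2 \ N1) : ℝ) * |y2 - w2| ≤ #(N1 ∩ N2) * (2 * M) :=
      mul_le_mul (by exact_mod_cast hBA.trans hsdiff.le) hfar (abs_nonneg _)
        (Nat.cast_nonneg _)
    linarith [sum_abs_sub_le_sum_abs_sub_add_card_mul (N2 \ N1) x w2 y2]
  have ha : 0 ≤ ∑ i ∈ N1 \ N2, |x i - y1| := sum_nonneg fun i _ => abs_nonneg _
  have hb : 0 ≤ ∑ i ∈ N2 \ N1, |x i - y2| := sum_nonneg fun i _ => abs_nonneg _
  linarith

theorem SC_condMedian_le (hU : N1 ∪ N2 = N) (hy1 : y1 ∈ C) (hy2 : y2 ∈ C) (hy : y1 ≠ y2)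
    (hcard : #N2 ≤ #N1) :
    SC x N1 N2 N (condMedian x N1 N2 C) ≤ 11 * SC x N1 N2 N (y1, y2) := by
  rcases le_or_gt #(N1 ∩ N2) #(N1 \ N2) with hinter | hsdiff
  · exact SC_condMedian_le_of_card_inter_le hU hy1 hy2 hy hcard hinter
  · exact SC_condMedian_le_of_card_sdiff_lt hU hy1 hy2 hy hcard hsdiff

end SocialCost

theorem conditionalMedian_socialCost_eleven_approx_general
    (N N1 N2 : Finset ℕ) (x : ℕ → ℝ) (C : Finset ℝ)
    (hU : N1 ∪ N2 = N)
    (y1 y2 : ℝ) (hy1 : y1 ∈ C) (hy2 : y2 ∈ C) (hy : y1 ≠ y2) :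
    SC x N1 N2 N (mechOutput x N1 N2 C) ≤ 11 * SC x N1 N2 N (y1, y2) := by
  unfold mechOutput
  split_ifs with hcard
  · exact SC_condMedian_le hU hy1 hy2 hy hcard
  · rw [SC_swap hU, SC_swap hU (y1, y2), Prod.swap_swap]
    exact SC_condMedian_le (union_comm N1 N2 ▸ hU) hy2 hy1 hy.symm (by omega)

/-- The Conditional-Median mechanism is 11-approximate for the social cost. -/
theorem conditionalMedian_socialCost_eleven_approx
    (N N1 N2 : Finset ℕ) (x : ℕ → ℝ) (C : Finset ℝ)
    (hN : N.Nonempty) (h1 : N1.Nonempty) (h2 : N2.Nonempty)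
    (hU : N1 ∪ N2 = N) (hC : 2 ≤ C.card)
    (y1 y2 : ℝ) (hy1 : y1 ∈ C) (hy2 : y2 ∈ C) (hy : y1 ≠ y2) :
    SC x N1 N2 N (mechOutput x N1 N2 C) ≤ 11 * SC x N1 N2 N (y1, y2) :=
  conditionalMedian_socialCost_eleven_approx_general N N1 N2 x C hU y1 y2 hy1 hy2 hy
end

section
/- The social-cost approximation ratio 11 of the Conditional-Median mechanism is tight: for every δ ∈ (0,1) there exists a facility-location instance and a feasible solution (y₁,y₂) with SC(y₁,y₂) > 0 such that the output (w₁,w₂) of the Conditional-Median mechanism on this instance satisfies SC(w₁,w₂) ≥ (11 − δ) · SC(y₁,y₂). -/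
/-!
In the bad instance `m + 1` of the agents approving both facilities sit at `0`; all other agents
sit at `1`: another `m + 1` approving both, `2m + 1` approving only facility 1 and `2m + 1` only
facility 2. Both facilities have `4m + 3` approvers and `N₁ ∩ N₂` is a majority of `N₁`, so the
mechanism places both facilities next to the median `0` of `N₁ ∩ N₂`: among the candidates
`-1, -1 + ε, 1, 1 + ε` it picks `-1 + ε` and then `-1`, the tie between `-1` and `1` going to the
smaller one. The agents at `1` then pay about `2` each, a social cost of about `11m`, whereas
`(1, 1 + ε)` costs about `m`, essentially `1` for each agent at `0`.
-/

open Finset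

lemma tloc_eq_of_forall {C : Finset ℝ} {p a : ℝ} (ha : a ∈ C)
    (hmin : ∀ c ∈ C, |p - a| ≤ |p - c|) (htie : ∀ c ∈ C, |p - c| = |p - a| → a ≤ c) :
    tloc C p = a := by
  have haS : a ∈ C.filter fun c => ∀ c' ∈ C, |p - c| ≤ |p - c'| := mem_filter.mpr ⟨ha, hmin⟩
  rw [tloc, ← coe_min' ⟨a, haS⟩, WithTop.untopD_coe]
  refine le_antisymm (min'_le _ _ haS) (le_min' _ _ _ fun c hc => ?_)
  obtain ⟨hcC, hc⟩ := mem_filter.mp hc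
  exact htie c hcC (le_antisymm (hc a ha) (hmin c hcC))

lemma medOf_replicate_add_replicate {u v : ℝ} (huv : u ≤ v) {a b : ℕ} (hba : b ≤ a)
    (ha : 0 < a) : medOf (Multiset.replicate a u + Multiset.replicate b v) = u := by
  have hsort : (Multiset.replicate a u + Multiset.replicate b v).sort (· ≤ ·)
      = List.replicate a u ++ List.replicate b v := by
    rw [Multiset.replicate, Multiset.replicate, Multiset.coe_add, Multiset.coe_sort]
    refine List.mergeSort_eq_self _ (List.pairwise_append.mpr ⟨?_, ?_, ?_⟩)
    · exact List.pairwise_replicate.mpr (Or.inr le_rfl)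
    · exact List.pairwise_replicate.mpr (Or.inr le_rfl)
    · intro x hx y hy
      rw [List.eq_of_mem_replicate hx, List.eq_of_mem_replicate hy]
      exact huv
  rw [medOf, hsort, Multiset.card_add, Multiset.card_replicate, Multiset.card_replicate,
    List.getD_append _ _ _ _ (by rw [List.length_replicate]; omega)]
  exact List.getD_replicate u (by omega)

lemma map_Ico_eq_replicate {f : ℕ → ℝ} {a b : ℕ} {c : ℝ}
    (hf : ∀ i, a ≤ i → i < b → f i = c) :
    (Multiset.Ico a b).map f = Multiset.replicate (b - a) c := by
  refine Multiset.eq_replicate.mpr ⟨by simp [Multiset.card_map, Multiset.Ico], fun y hy => ?_⟩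
  obtain ⟨i, hi, rfl⟩ := Multiset.mem_map.mp hy
  exact hf i (Multiset.mem_Ico.mp hi).1 (Multiset.mem_Ico.mp hi).2

lemma sum_range_add_add_of_const (f : ℕ → ℝ) {a b c : ℕ} {α β γ : ℝ}
    (hα : ∀ i < a, f i = α) (hβ : ∀ i < b, f (a + i) = β) (hγ : ∀ i < c, f (a + b + i) = γ) :
    ∑ i ∈ range (a + b + c), f i = a * α + b * β + c * γ := by
  rw [sum_range_add, sum_range_add, sum_congr rfl fun i hi => hα i (mem_range.mp hi),
    sum_congr rfl fun i hi => hβ i (mem_range.mp hi),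
    sum_congr rfl fun i hi => hγ i (mem_range.mp hi)]
  simp

namespace TightInstance

noncomputable def pos (m i : ℕ) : ℝ := if i < 5 * m + 3 then 1 else 0

def agents (m : ℕ) : Finset ℕ := range (6 * m + 4)

def approvers₁ (m : ℕ) : Finset ℕ := range (2 * m + 1) ∪ Ico (4 * m + 2) (6 * m + 4)

def approvers₂ (m : ℕ) : Finset ℕ := Ico (2 * m + 1) (6 * m + 4)

noncomputable def candidates (ε : ℝ) : Finset ℝ := {-1, -1 + ε, 1, 1 + ε}

variable {m : ℕ} {ε : ℝ}

lemma approvers₁_union_approvers₂ : approvers₁ m ∪ approvers₂ m = agents m := by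
  ext i
  simp only [approvers₁, approvers₂, agents, mem_union, mem_range, mem_Ico]
  omega

lemma approvers₁_inter_approvers₂ : approvers₁ m ∩ approvers₂ m = Ico (4 * m + 2) (6 * m + 4) := by
  ext i
  simp only [approvers₁, approvers₂, mem_inter, mem_union, mem_range, mem_Ico]
  omega

lemma approvers₁_sdiff_approvers₂ : approvers₁ m \ approvers₂ m = range (2 * m + 1) := by
  ext i
  simp only [approvers₁, approvers₂, mem_sdiff, mem_union, mem_range, mem_Ico]
  omega

lemma card_approvers₁ : (approvers₁ m).card = 4 * m + 3 := by
  rw [← card_sdiff_add_card_inter _ (approvers₂ m), approvers₁_inter_approvers₂,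
    approvers₁_sdiff_approvers₂, Nat.card_Ico, card_range]
  omega

lemma card_approvers₂ : (approvers₂ m).card = 4 * m + 3 := by
  rw [approvers₂, Nat.card_Ico]
  omega

lemma medianPos_inter : medianPos (approvers₁ m ∩ approvers₂ m) (pos m) = 0 := by
  rw [medianPos, approvers₁_inter_approvers₂]
  change medOf ((Multiset.Ico (4 * m + 2) (6 * m + 4)).map (pos m)) = 0
  rw [← Multiset.Ico_add_Ico_eq_Ico (b := (5 * m + 3 : ℕ)) (by omega) (by omega), Multiset.map_add,
    map_Ico_eq_replicate (f := pos m) (c := 1) fun i _ hi => if_pos hi,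
    map_Ico_eq_replicate (f := pos m) (c := 0) fun i hi _ => if_neg (by omega), add_comm]
  exact medOf_replicate_add_replicate zero_le_one (by omega) (by omega)

lemma eq_or_one_le_abs_of_mem_candidates (hε : 0 < ε) {c : ℝ} (hc : c ∈ candidates ε) :
    c = -1 + ε ∨ 1 ≤ |c| ∧ -1 ≤ c := by
  simp only [candidates, mem_insert, mem_singleton] at hc
  rcases hc with rfl | rfl | rfl | rfl
  · norm_num
  · exact Or.inl rfl
  · norm_num
  · right
    rw [abs_of_pos (by linarith)]
    constructor <;> linarith

lemma tloc_candidates_zero (hε0 : 0 < ε) (hε1 : ε < 1) : tloc (candidates ε) 0 = -1 + ε := by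
  have hdist : |0 - (-1 + ε)| = 1 - ε := by
    rw [zero_sub, abs_neg, abs_of_neg (by linarith)]
    ring
  refine tloc_eq_of_forall (by simp [candidates]) (fun c hc => ?_) (fun c hc htie => ?_) <;>
  rcases eq_or_one_le_abs_of_mem_candidates hε0 hc with rfl | ⟨hc1, -⟩
  · exact le_rfl
  · rw [hdist, zero_sub, abs_neg]
    linarith
  · exact le_rfl
  · rw [hdist, zero_sub, abs_neg] at htie
    linarith

lemma sloc_candidates_zero (hε0 : 0 < ε) (hε1 : ε < 1) : sloc (candidates ε) 0 = -1 := by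
  rw [sloc, tloc_candidates_zero hε0 hε1]
  refine tloc_eq_of_forall (mem_erase.mpr ⟨by linarith, by simp [candidates]⟩)
    (fun c hc => ?_) (fun c hc _ => ?_) <;>
  obtain ⟨hne, hc⟩ := mem_erase.mp hc <;>
  rcases eq_or_one_le_abs_of_mem_candidates hε0 hc with rfl | ⟨hc1, hc2⟩
  · exact absurd rfl hne
  · norm_num [hc1]
  · exact absurd rfl hne
  · exact hc2

lemma mechOutput_eq (hε0 : 0 < ε) (hε1 : ε < 1) :
    mechOutput (pos m) (approvers₁ m) (approvers₂ m) (candidates ε) = (-1 + ε, -1) := by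
  have hmajority : ¬ (approvers₁ m ∩ approvers₂ m).card ≤ (approvers₁ m \ approvers₂ m).card := by
    rw [approvers₁_inter_approvers₂, approvers₁_sdiff_approvers₂, Nat.card_Ico, card_range]
    omega
  rw [mechOutput, if_pos (by rw [card_approvers₁, card_approvers₂]), condMedian, if_neg hmajority]
  simp only [medianPos_inter, tloc_candidates_zero hε0 hε1, sloc_candidates_zero hε0 hε1]

lemma socialCost_eq {y : ℝ × ℝ} (hy : |1 - y.1| ≤ |1 - y.2|) :
    SC (pos m) (approvers₁ m) (approvers₂ m) (agents m) y
      = (2 * m + 1) * |1 - y.1| + (3 * m + 2) * |1 - y.2| + (m + 1) * max |y.1| |y.2| := by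
  have hsplit : 6 * m + 4 = (2 * m + 1) + (3 * m + 2) + (m + 1) := by ring
  rw [SC, agents, hsplit, sum_range_add_add_of_const _ (α := |1 - y.1|) (β := |1 - y.2|)
    (γ := max |y.1| |y.2|)]
  · push_cast
    ring
  · intro i hi
    have h₁ : i ∈ approvers₁ m := by simp only [approvers₁, mem_union, mem_range]; omega
    have h₂ : i ∉ approvers₂ m := by simp only [approvers₂, mem_Ico]; omega
    simp [cost, h₁, h₂, pos, show i < 5 * m + 3 by omega]
  · intro i hi
    have h₂ : 2 * m + 1 + i ∈ approvers₂ m := by simp only [approvers₂, mem_Ico]; omega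
    by_cases h₁ : 2 * m + 1 + i ∈ approvers₁ m <;>
    simp [cost, h₁, h₂, pos, show 2 * m + 1 + i < 5 * m + 3 by omega, hy]
  · intro i hi
    have h₁ : 2 * m + 1 + (3 * m + 2) + i ∈ approvers₁ m := by
      simp only [approvers₁, mem_union, mem_Ico]; omega
    have h₂ : 2 * m + 1 + (3 * m + 2) + i ∈ approvers₂ m := by
      simp only [approvers₂, mem_Ico]; omega
    simp [cost, h₁, h₂, pos, show ¬ 2 * m + 1 + (3 * m + 2) + i < 5 * m + 3 by omega]

lemma socialCost_mechOutput (hε0 : 0 < ε) (hε1 : ε < 1) :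
    SC (pos m) (approvers₁ m) (approvers₂ m) (agents m)
        (mechOutput (pos m) (approvers₁ m) (approvers₂ m) (candidates ε))
      = 11 * m + 7 - (2 * m + 1) * ε := by
  have h₁ : |1 - (-1 + ε)| = 2 - ε := by rw [abs_of_pos (by linarith)]; ring
  have h₂ : |1 - (-1 : ℝ)| = 2 := by norm_num
  have h₃ : max |-1 + ε| |(-1 : ℝ)| = 1 := by
    rw [abs_of_neg (by linarith), abs_neg, abs_one, max_eq_right (by linarith)]
  rw [mechOutput_eq hε0 hε1, socialCost_eq] <;> dsimp only <;> rw [h₁, h₂]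
  · rw [h₃]
    ring
  · linarith

lemma socialCost_optimum (hε0 : 0 < ε) :
    SC (pos m) (approvers₁ m) (approvers₂ m) (agents m) (1, 1 + ε)
      = m + 1 + (4 * m + 3) * ε := by
  have h₁ : |1 - (1 + ε)| = ε := by rw [sub_add_cancel_left, abs_neg, abs_of_pos hε0]
  have h₂ : max |(1 : ℝ)| |1 + ε| = 1 + ε := by
    rw [abs_one, abs_of_pos (by linarith), max_eq_right (by linarith)]
  rw [socialCost_eq] <;> dsimp only <;> rw [sub_self, abs_zero, h₁]
  · rw [h₂]
    ring
  · exact hε0.le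

end TightInstance

theorem conditionalMedian_socialCost_tight_general (δ : ℝ) (hδ0 : 0 < δ) :
    ∃ (N N1 N2 : Finset ℕ) (x : ℕ → ℝ) (C : Finset ℝ) (y1 y2 : ℝ),
      N.Nonempty ∧ N1.Nonempty ∧ N2.Nonempty ∧ N1 ∪ N2 = N ∧ 2 ≤ C.card ∧
      y1 ∈ C ∧ y2 ∈ C ∧ y1 ≠ y2 ∧ 0 < SC x N1 N2 N (y1, y2) ∧
      (11 - δ) * SC x N1 N2 N (y1, y2) ≤ SC x N1 N2 N (mechOutput x N1 N2 C) := by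
  set m := ⌈50 / δ⌉₊
  have hm : 50 ≤ δ * m := by
    rw [mul_comm, ← div_le_iff₀ hδ0]
    exact Nat.le_ceil _
  set ε : ℝ := 1 / (m + 2)
  have hε0 : 0 < ε := by positivity
  have hε1 : ε < 1 := by
    rw [div_lt_one (by positivity)]
    linarith [(Nat.cast_nonneg m : (0 : ℝ) ≤ m)]
  have hεm : ε * (m + 2) = 1 := one_div_mul_cancel (by positivity)
  have h₁ : (1 : ℝ) ∈ TightInstance.candidates ε := by simp [TightInstance.candidates]
  have h₂ : 1 + ε ∈ TightInstance.candidates ε := by simp [TightInstance.candidates]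
  refine ⟨TightInstance.agents m, TightInstance.approvers₁ m, TightInstance.approvers₂ m,
    TightInstance.pos m, TightInstance.candidates ε, 1, 1 + ε,
    ⟨0, by simp [TightInstance.agents]⟩, ⟨0, by simp [TightInstance.approvers₁]⟩,
    ⟨2 * m + 1, by simp only [TightInstance.approvers₂, mem_Ico]; omega⟩,
    TightInstance.approvers₁_union_approvers₂, one_lt_card.mpr ⟨1, h₁, 1 + ε, h₂, by linarith⟩,
    h₁, h₂, by linarith, ?_, ?_⟩ <;>
  rw [TightInstance.socialCost_optimum hε0]
  · positivity
  · rw [TightInstance.socialCost_mechOutput hε0 hε1]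
    -- `ε (m + 2) = 1` makes the optimum at most `m + 5` and the mechanism's cost at least `11m + 5`
    nlinarith [mul_nonneg (mul_nonneg hδ0.le hε0.le) (Nat.cast_nonneg m)]

/-- The approximation ratio 11 for the social cost is tight. -/
theorem conditionalMedian_socialCost_tight (δ : ℝ) (hδ0 : 0 < δ) (hδ1 : δ < 1) :
    ∃ (N N1 N2 : Finset ℕ) (x : ℕ → ℝ) (C : Finset ℝ) (y1 y2 : ℝ),
      N.Nonempty ∧ N1.Nonempty ∧ N2.Nonempty ∧ N1 ∪ N2 = N ∧ 2 ≤ C.card ∧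
      y1 ∈ C ∧ y2 ∈ C ∧ y1 ≠ y2 ∧ 0 < SC x N1 N2 N (y1, y2) ∧
      (11 - δ) * SC x N1 N2 N (y1, y2) ≤ SC x N1 N2 N (mechOutput x N1 N2 C) :=
  conditionalMedian_socialCost_tight_general δ hδ0
end

section
/- Placing two facilities at the two candidate locations closest to the median of the reported positions is strategyproof for agents whose cost is the maximum of their distances to the two facilities: let ι be a nonempty finite set, C ⊆ ℝ a finite set with |C| ≥ 2, and for x : ι → ℝ let m = med(x) be the ⌈|ι|/2⌉-th smallest value among the x_i, and define h(x) = (t(m), s(m)), where t(p) is the smallest element of C minimizing |p − c| over c ∈ C and s(p) is the smallest element of C \ {t(p)} minimizing |p − c| over c ∈ C \ {t(p)}. Then for every x : ι → ℝ, every i ∈ ι, and every x' ∈ ℝ, writing h(x) = (w₁,w₂) and h(x[i ↦ x']) = (w₁',w₂'), one has max(|x_i − w₁|, |x_i − w₂|) ≤ max(|x_i − w₁'|, |x_i − w₂'|). -/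
/-!
Seen from a point `r`, order the candidate locations by distance to `r`, ties going to the
smaller location (`closeKey r`); the mechanism places the facilities at the two least
candidates for this order at the median. For fixed `u ≠ v`, the points from which `v`
precedes `u` form a half-line. If agent `i` at `a` misreports, the median can only move away
from `a`, so the old median `p` lies between `a` and the new median `q`. If the old facility
`u` farther from `a` were farther than both new ones, some new facility `v` would not be an old
one; then `v` precedes `u` from `a` and from `q` but not from `p`, which is impossible.
-/

open Finset

theorem List.SortedLE.lt_countP_le_iff {α : Type*} [LinearOrder α] {L : List α}
    (hL : L.SortedLE) {k : ℕ} (hk : k < L.length) (y : α) :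
    k < L.countP (· ≤ y) ↔ L[k] ≤ y := by
  constructor
  · contrapose!
    intro hy
    have hdrop : (L.drop k).countP (· ≤ y) = 0 := by
      refine List.countP_eq_zero.2 fun z hz => ?_
      obtain ⟨j, hj, rfl⟩ := List.getElem_of_mem hz
      rw [List.getElem_drop]
      simpa using hy.trans_le (hL.getElem_le_getElem_of_le (Nat.le_add_right k j))
    calc L.countP (· ≤ y) = (L.take k).countP (· ≤ y) + (L.drop k).countP (· ≤ y) := by
          rw [← List.countP_append, List.take_append_drop]
      _ ≤ k := by simpa [hdrop] using (List.countP_le_length).trans (List.length_take_le k L)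
  · intro hy
    have htake : (L.take (k + 1)).countP (· ≤ y) = (L.take (k + 1)).length := by
      refine List.countP_eq_length.2 fun z hz => ?_
      obtain ⟨j, hj, rfl⟩ := List.getElem_of_mem hz
      rw [List.getElem_take]
      simp only [List.length_take] at hj
      simpa using (hL.getElem_le_getElem_of_le (by omega)).trans hy
    calc k < (L.take (k + 1)).length := by simp; omega
      _ = (L.take (k + 1)).countP (· ≤ y) := htake.symm
      _ ≤ L.countP (· ≤ y) := (List.take_sublist _ _).countP_le

theorem medOf_le_iff {t : Multiset ℝ} (ht : t ≠ 0) (y : ℝ) :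
    medOf t ≤ y ↔ (Multiset.card t + 1) / 2 ≤ t.countP (· ≤ y) := by
  have hcard : 0 < Multiset.card t := Multiset.card_pos.2 ht
  have hk : (Multiset.card t + 1) / 2 - 1 < (t.sort (· ≤ ·)).length := by
    rw [Multiset.length_sort]; omega
  have hcount : (t.sort (· ≤ ·)).countP (· ≤ y) = t.countP (· ≤ y) := by
    conv_rhs => rw [← Multiset.sort_eq t (· ≤ ·)]
    rw [Multiset.coe_countP]
  rw [medOf, List.getD_eq_getElem _ _ hk,
    ← ((Multiset.pairwise_sort t _).sortedLE.lt_countP_le_iff hk y), hcount]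
  omega

theorem medOf_cons_mem_uIcc (s : Multiset ℝ) (a a' : ℝ) :
    medOf (a ::ₘ s) ∈ Set.uIcc a (medOf (a' ::ₘ s)) := by
  set m := medOf (a ::ₘ s)
  set m' := medOf (a' ::ₘ s)
  rcases lt_trichotomy a m with ha | ha | ha
  · refine Set.mem_uIcc_of_le ha.le (not_lt.1 fun hlt => ?_)
    -- `a` does not exceed the threshold `y`, so replacing it by `a'` cannot raise the count
    set y := max a m'
    have hy : m' ≤ y := le_max_right _ _
    have hy' : ¬ m ≤ y := not_le.2 (max_lt ha hlt)
    rw [medOf_le_iff Multiset.cons_ne_zero, Multiset.card_cons] at hy hy'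
    rw [Multiset.countP_cons, if_pos (le_max_left a m')] at hy'
    rw [Multiset.countP_cons] at hy
    split_ifs at hy <;> omega
  · exact ha ▸ Set.left_mem_uIcc
  · refine Set.mem_uIcc_of_ge ?_ ha.le
    have hm := (medOf_le_iff Multiset.cons_ne_zero m).1 le_rfl
    rw [Multiset.card_cons] at hm
    rw [medOf_le_iff Multiset.cons_ne_zero, Multiset.card_cons]
    calc (Multiset.card s + 1 + 1) / 2 ≤ (a ::ₘ s).countP (· ≤ m) := hm
      _ = s.countP (· ≤ m) := Multiset.countP_cons_of_neg _ (not_le.2 ha)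
      _ ≤ (a' ::ₘ s).countP (· ≤ m) := Multiset.countP_le_of_le _ (Multiset.le_cons_self _ _)

def closeKey (p c : ℝ) : ℝ ×ₗ ℝ := toLex (|p - c|, c)

theorem closeKey_injective (p : ℝ) : Function.Injective (closeKey p) :=
  fun _ _ h => congrArg Prod.snd (toLex.injective h)

theorem closeKey_lt_of_abs_sub_lt {p u v : ℝ} (h : |p - u| < |p - v|) :
    closeKey p u < closeKey p v :=
  Prod.Lex.toLex_lt_toLex.2 (Or.inl h)

theorem setOf_closeKey_lt_of_lt {u v : ℝ} (h : u < v) :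
    {r | closeKey r u < closeKey r v} = Set.Iic ((u + v) / 2) := by
  ext r
  simp only [closeKey, Prod.Lex.toLex_lt_toLex, h, and_true, ← le_iff_lt_or_eq,
    Set.mem_ofPred_eq, Set.mem_Iic]
  constructor <;> intro hr <;> cases abs_cases (r - u) <;> cases abs_cases (r - v) <;> linarith

theorem setOf_closeKey_lt_of_gt {u v : ℝ} (h : v < u) :
    {r | closeKey r u < closeKey r v} = Set.Ioi ((u + v) / 2) := by
  ext r
  simp only [closeKey, Prod.Lex.toLex_lt_toLex, h.not_gt, and_false, or_false,
    Set.mem_ofPred_eq, Set.mem_Ioi]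
  constructor <;> intro hr <;> cases abs_cases (r - u) <;> cases abs_cases (r - v) <;> linarith

theorem ordConnected_setOf_closeKey_lt (u v : ℝ) :
    {r | closeKey r u < closeKey r v}.OrdConnected := by
  rcases lt_trichotomy u v with h | rfl | h
  · rw [setOf_closeKey_lt_of_lt h]; exact Set.ordConnected_Iic
  · simp only [lt_self_iff_false, Set.ofPred_false]; exact Set.ordConnected_empty
  · rw [setOf_closeKey_lt_of_gt h]; exact Set.ordConnected_Ioi

theorem tloc_eq_min' {C : Finset ℝ} {p : ℝ}
    (hF : (C.filter fun c => ∀ c' ∈ C, |p - c| ≤ |p - c'|).Nonempty) :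
    tloc C p = (C.filter fun c => ∀ c' ∈ C, |p - c| ≤ |p - c'|).min' hF := by
  rw [tloc, ← Finset.coe_min' hF]
  rfl

section ClosestTwo

variable {C : Finset ℝ} {p : ℝ}

theorem tloc_mem_filter (hC : C.Nonempty) :
    tloc C p ∈ C.filter fun c => ∀ c' ∈ C, |p - c| ≤ |p - c'| := by
  obtain ⟨b, hb, hbmin⟩ := C.exists_min_image (fun c => |p - c|) hC
  have hF : (C.filter fun c => ∀ c' ∈ C, |p - c| ≤ |p - c'|).Nonempty :=
    ⟨b, mem_filter.2 ⟨hb, hbmin⟩⟩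
  exact tloc_eq_min' hF ▸ min'_mem _ hF

theorem tloc_mem (hC : C.Nonempty) : tloc C p ∈ C :=
  (mem_filter.1 (tloc_mem_filter hC)).1

theorem closeKey_tloc_le (hC : C.Nonempty) {c : ℝ} (hc : c ∈ C) :
    closeKey p (tloc C p) ≤ closeKey p c := by
  have hmin := (mem_filter.1 (tloc_mem_filter (p := p) hC)).2
  rcases (hmin c hc).lt_or_eq with hlt | heq
  · exact (closeKey_lt_of_abs_sub_lt hlt).le
  · refine Prod.Lex.toLex_le_toLex.2 (Or.inr ⟨heq, ?_⟩)
    have hF : (C.filter fun c => ∀ c' ∈ C, |p - c| ≤ |p - c'|).Nonempty :=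
      ⟨_, tloc_mem_filter hC⟩
    rw [tloc_eq_min' hF]
    exact min'_le _ _ (mem_filter.2 ⟨hc, fun c' hc' => heq ▸ hmin c' hc'⟩)

theorem sloc_mem_erase (hC : C.Nontrivial) : sloc C p ∈ C.erase (tloc C p) :=
  tloc_mem hC.erase_nonempty

theorem closeKey_sloc_le (hC : C.Nontrivial) {c : ℝ} (hc : c ∈ C.erase (tloc C p)) :
    closeKey p (sloc C p) ≤ closeKey p c :=
  closeKey_tloc_le hC.erase_nonempty hc

noncomputable def closestTwo (C : Finset ℝ) (p : ℝ) : Finset ℝ := {tloc C p, sloc C p}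

theorem closestTwo_subset (hC : C.Nontrivial) : closestTwo C p ⊆ C :=
  insert_subset (tloc_mem hC.nonempty)
    (singleton_subset_iff.2 (mem_of_mem_erase (sloc_mem_erase hC)))

theorem card_closestTwo (hC : C.Nontrivial) : #(closestTwo C p) = 2 :=
  card_pair (ne_of_mem_erase (sloc_mem_erase hC)).symm

theorem closeKey_lt_of_mem_closestTwo (hC : C.Nontrivial) {u z : ℝ} (hu : u ∈ closestTwo C p)
    (hz : z ∈ C) (hz' : z ∉ closestTwo C p) : closeKey p u < closeKey p z := by
  have hle : closeKey p u ≤ closeKey p z := by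
    simp only [closestTwo, mem_insert, mem_singleton, not_or] at hu hz'
    rcases hu with rfl | rfl
    · exact closeKey_tloc_le hC.nonempty hz
    · exact closeKey_sloc_le hC (mem_erase.2 ⟨hz'.1, hz⟩)
  exact hle.lt_of_ne ((closeKey_injective p).ne (ne_of_mem_of_not_mem hu hz'))

theorem max_abs_sub_tloc_sloc_le (hC : C.Nontrivial) {a q : ℝ} (hp : p ∈ Set.uIcc a q) :
    max |a - tloc C p| |a - sloc C p| ≤ max |a - tloc C q| |a - sloc C q| := by
  by_contra! hlt
  obtain ⟨u, hu, hau⟩ :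
      ∃ u ∈ closestTwo C p, max |a - tloc C p| |a - sloc C p| = |a - u| := by
    rcases max_choice |a - tloc C p| |a - sloc C p| with h | h
    exacts [⟨_, mem_insert_self _ _, h⟩, ⟨_, mem_insert_of_mem (mem_singleton_self _), h⟩]
  have hfar : ∀ v ∈ closestTwo C q, |a - v| < |a - u| := by
    simp only [closestTwo, mem_insert, mem_singleton, forall_eq_or_imp, forall_eq, ← hau]
    exact ⟨(le_max_left _ _).trans_lt hlt, (le_max_right _ _).trans_lt hlt⟩
  obtain ⟨v, hvq, hvp⟩ : ∃ v ∈ closestTwo C q, v ∉ closestTwo C p := by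
    by_contra! hsub
    have heq := eq_of_subset_of_card_le hsub (by rw [card_closestTwo hC, card_closestTwo hC])
    exact (hfar u (heq ▸ hu)).false
  have hvu : closeKey p v < closeKey p u :=
    (ordConnected_setOf_closeKey_lt v u).uIcc_subset (closeKey_lt_of_abs_sub_lt (hfar v hvq))
      (closeKey_lt_of_mem_closestTwo hC hvq (closestTwo_subset hC hu)
        fun h => (hfar u h).false) hp
  exact (closeKey_lt_of_mem_closestTwo hC hu (closestTwo_subset hC hvq) hvp).asymm hvu

end ClosestTwo

theorem median_two_closest_strategyproof_general
    {ι : Type*} [Fintype ι] [DecidableEq ι]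
    (C : Finset ℝ) (hC : 2 ≤ C.card)
    (x : ι → ℝ) (i : ι) (x' : ℝ) :
    max |x i - tloc C (medOf (Finset.univ.val.map x))|
        |x i - sloc C (medOf (Finset.univ.val.map x))| ≤
      max |x i - tloc C (medOf (Finset.univ.val.map (Function.update x i x')))|
          |x i - sloc C (medOf (Finset.univ.val.map (Function.update x i x')))| := by
  have hsplit (y : ι → ℝ) : univ.val.map y = y i ::ₘ (univ.val.erase i).map y := by
    rw [← Multiset.map_cons, Multiset.cons_erase (mem_univ_val i)]
  have hothers : (univ.val.erase i).map (Function.update x i x') = (univ.val.erase i).map x :=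
    Multiset.map_congr rfl fun j hj =>
      Function.update_of_ne (univ.nodup.mem_erase_iff.1 hj).1 _ _
  rw [hsplit x, hsplit (Function.update x i x'), hothers, Function.update_self]
  exact max_abs_sub_tloc_sloc_le (one_lt_card_iff_nontrivial.1 hC) (medOf_cons_mem_uIcc _ _ _)

/-- Placing two facilities at the two candidate locations closest to the median of the
reported positions is strategyproof for agents whose cost is the maximum of their
distances to the two facilities. -/
theorem median_two_closest_strategyproof
    {ι : Type*} [Fintype ι] [DecidableEq ι] [Nonempty ι]
    (C : Finset ℝ) (hC : 2 ≤ C.card)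
    (x : ι → ℝ) (i : ι) (x' : ℝ) :
    max |x i - tloc C (medOf (Finset.univ.val.map x))|
        |x i - sloc C (medOf (Finset.univ.val.map x))| ≤
      max |x i - tloc C (medOf (Finset.univ.val.map (Function.update x i x')))|
          |x i - sloc C (medOf (Finset.univ.val.map (Function.update x i x')))| :=
  median_two_closest_strategyproof_general C hC x i x'
end
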